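/- arXiv:2309.05442 — 6 statements merged into one kernel-verified Lean document; each statement's English description precedes it below -/
import Mathlib

section
/- Let G = (V,E) be a graph and S ⊆ V a set of vertices with exactly m edges having one endpoint in S (counting edges from S to N(S), with multiplicity over endpoints in S), such that |N(S)| ≥ (1−α)·m for some α ≥ 0. Then the number of unique neighbors of S (vertices adjacent to exactly one vertex in S) is at least (1−2α)·m. -/
/-!
Let `f u` be the number of neighbours of `u` in `S`. Double counting gives `m = ∑ᵤ f u`, and
`N(S)` is the set where `f u ≠ 0`. Every `u ∈ N(S)` contributes at least `2` to `f u + [f u = 1]`,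
so `2 |N(S)| ≤ m + #unique neighbours`, and `|N(S)| ≥ (1 - α) m` yields the bound.
-/

/-- The neighborhood `N(S)` of a set of vertices. -/
def nbhd {V : Type*} [Fintype V] [DecidableEq V] (G : SimpleGraph V)
    [DecidableRel G.Adj] (S : Finset V) : Finset V :=
  S.biUnion fun s => G.neighborFinset s

open Finset

theorem two_mul_card_filter_ne_zero_le {ι : Type*} (T : Finset ι) (f : ι → ℕ) :
    2 * #{x ∈ T | f x ≠ 0} ≤ ∑ x ∈ T, f x + #{x ∈ T | f x = 1} := by
  simp only [card_filter, mul_sum, ← sum_add_distrib]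
  refine sum_le_sum fun x _ => ?_
  split_ifs <;> omega

namespace SimpleGraph

variable {V : Type*} [Fintype V] (G : SimpleGraph V) [DecidableRel G.Adj]

theorem sum_degree_eq_sum_card_filter_adj (S : Finset V) :
    ∑ s ∈ S, G.degree s = ∑ u, #{s ∈ S | G.Adj s u} := by
  simpa only [← card_neighborFinset_eq_degree, neighborFinset_eq_filter, bipartiteAbove,
    bipartiteBelow] using sum_card_bipartiteAbove_eq_sum_card_bipartiteBelow (t := univ) G.Adj

theorem nbhd_eq_filter_card_ne_zero [DecidableEq V] (S : Finset V) :
    nbhd G S = ({u | #{s ∈ S | G.Adj s u} ≠ 0} : Finset V) := by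
  ext u
  simp [nbhd]

end SimpleGraph

theorem stmt1_general {V : Type*} [Fintype V] [DecidableEq V] (G : SimpleGraph V)
    [DecidableRel G.Adj] (S : Finset V) (m : ℕ) (α : ℝ)
    (hm : m = ∑ s ∈ S, G.degree s)
    (hexp : (1 - α) * m ≤ ((nbhd G S).card : ℝ)) :
    (1 - 2 * α) * m ≤
      ((Finset.univ.filter fun u => (S.filter fun s => G.Adj s u).card = 1).card : ℝ) := by
  have hcount : 2 * #(nbhd G S) ≤ m + #{u | #{s ∈ S | G.Adj s u} = 1} := by
    rw [G.nbhd_eq_filter_card_ne_zero, hm, G.sum_degree_eq_sum_card_filter_adj]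
    exact two_mul_card_filter_ne_zero_le univ _
  have hcountR : (2 * #(nbhd G S) : ℝ) ≤ m + #{u | #{s ∈ S | G.Adj s u} = 1} := by
    exact_mod_cast hcount
  linarith

/-- If `S` has `m` outgoing edge-endpoint pairs and `|N(S)| ≥ (1−α)m`,
then `S` has at least `(1−2α)m` unique neighbors. -/
theorem stmt1 {V : Type*} [Fintype V] [DecidableEq V] (G : SimpleGraph V)
    [DecidableRel G.Adj] (S : Finset V) (m : ℕ) (α : ℝ) (hα : 0 ≤ α)
    (hm : m = ∑ s ∈ S, G.degree s)
    (hexp : (1 - α) * m ≤ ((nbhd G S).card : ℝ)) :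
    (1 - 2 * α) * m ≤
      ((Finset.univ.filter fun u => (S.filter fun s => G.Adj s u).card = 1).card : ℝ) :=
  stmt1_general G S m α hm hexp
end

section
/- Let G = (V,E) be a graph with maximum degree Δ, and suppose that for some α ≤ 1/2 and β < 1/2, every set S ⊆ V with |S| ≤ α·|V| satisfies |N(S)| ≥ (1−β)·Δ·|S|. Then for any two disjoint subsets S, S' ⊆ V with |S| ≤ α·|V|/2 and |S'| ≥ |S|, the number of vertices v ∈ S' with |N(v) ∩ N(S)| > 2βΔ is at most |S|. -/
open Finset

section Neighborhood

variable {V : Type*} [Fintype V] [DecidableEq V] (G : SimpleGraph V) [DecidableRel G.Adj]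

lemma card_nbhd_le {Δ : ℕ} (hΔ : ∀ v, G.degree v ≤ Δ) (S : Finset V) :
    #(nbhd G S) ≤ #S * Δ :=
  card_biUnion_le_card_mul _ _ _ fun v _ => (G.card_neighborFinset_eq_degree v).trans_le (hΔ v)

lemma nbhd_union_subset (S T : Finset V) :
    nbhd G (S ∪ T) ⊆ nbhd G S ∪ T.biUnion fun v => G.neighborFinset v \ nbhd G S := by
  intro x hx
  obtain ⟨v, hv, hxv⟩ := mem_biUnion.mp hx
  by_cases hxS : x ∈ nbhd G S
  · exact mem_union_left _ hxS
  · rcases mem_union.mp hv with hvS | hvT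
    · exact absurd (mem_biUnion.mpr ⟨v, hvS, hxv⟩) hxS
    · exact mem_union_right _ (mem_biUnion.mpr ⟨v, hvT, mem_sdiff.mpr ⟨hxv, hxS⟩⟩)

lemma card_nbhd_union_le (S T : Finset V) :
    #(nbhd G (S ∪ T)) ≤ #(nbhd G S) + ∑ v ∈ T, #(G.neighborFinset v \ nbhd G S) :=
  (card_le_card (nbhd_union_subset G S T)).trans <|
    (card_union_le _ _).trans <| Nat.add_le_add_left card_biUnion_le _

lemma card_nbhd_union_lt {Δ : ℕ} (hΔ : ∀ v, G.degree v ≤ Δ) {β : ℝ} {S T : Finset V}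
    (hT : T.Nonempty) (hTS : #T = #S)
    (hshared : ∀ v ∈ T, 2 * β * Δ < #(G.neighborFinset v ∩ nbhd G S)) :
    (#(nbhd G (S ∪ T)) : ℝ) < 2 * (1 - β) * Δ * #S := by
  have hnew : ∀ v ∈ T, (#(G.neighborFinset v \ nbhd G S) : ℝ) < (1 - 2 * β) * Δ := by
    intro v hv
    have hsplit : (#(G.neighborFinset v \ nbhd G S) : ℝ) + #(G.neighborFinset v ∩ nbhd G S)
        = G.degree v := by
      rw [← G.card_neighborFinset_eq_degree]
      exact_mod_cast card_sdiff_add_card_inter _ _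
    have hdeg : (G.degree v : ℝ) ≤ Δ := by exact_mod_cast hΔ v
    linarith [hshared v hv]
  have hold : (#(nbhd G S) : ℝ) ≤ #S * Δ := by exact_mod_cast card_nbhd_le G hΔ S
  calc (#(nbhd G (S ∪ T)) : ℝ)
      ≤ #(nbhd G S) + ∑ v ∈ T, (#(G.neighborFinset v \ nbhd G S) : ℝ) := by
        exact_mod_cast card_nbhd_union_le G S T
    _ < #S * Δ + ∑ _v ∈ T, (1 - 2 * β) * (Δ : ℝ) := by
        exact add_lt_add_of_le_of_lt hold (sum_lt_sum_of_nonempty hT hnew)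
    _ = 2 * (1 - β) * Δ * #S := by rw [sum_const, nsmul_eq_mul, hTS]; ring

end Neighborhood

theorem stmt3_general {V : Type*} [Fintype V] [DecidableEq V] (G : SimpleGraph V)
    [DecidableRel G.Adj] (Δ : ℕ) (hΔ : ∀ v, G.degree v ≤ Δ)
    (α β : ℝ) (hβ0 : 0 ≤ β)
    (hexp : ∀ S : Finset V, (S.card : ℝ) ≤ α * Fintype.card V →
      (1 - β) * Δ * S.card ≤ ((nbhd G S).card : ℝ))
    (S S' : Finset V) (hdisj : Disjoint S S')
    (hScard : (S.card : ℝ) ≤ α * Fintype.card V / 2) :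
    ((S'.filter fun v =>
        2 * β * Δ < ((G.neighborFinset v ∩ nbhd G S).card : ℝ)).card : ℝ) ≤ S.card := by
  set T₀ := S'.filter fun v => 2 * β * Δ < ((G.neighborFinset v ∩ nbhd G S).card : ℝ)
  by_contra! hcon
  have hS : S.Nonempty := by
    obtain ⟨v, hv⟩ : T₀.Nonempty :=
      card_pos.mp (by exact_mod_cast (Nat.cast_nonneg _).trans_lt hcon)
    have hshared : 0 < #(G.neighborFinset v ∩ nbhd G S) := by
      have := (mem_filter.mp hv).2
      exact_mod_cast (by positivity : (0 : ℝ) ≤ 2 * β * Δ).trans_lt this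
    obtain ⟨w, hw⟩ := card_pos.mp hshared
    obtain ⟨s, hs, -⟩ := mem_biUnion.mp (mem_inter.mp hw).2
    exact ⟨s, hs⟩
  obtain ⟨T, hTT₀, hTS⟩ :=
    exists_subset_card_eq (s := T₀) (n := #S) (by exact_mod_cast hcon.le)
  have hdisjT : Disjoint S T := hdisj.mono_right (hTT₀.trans (filter_subset _ _))
  have hcardST : (#(S ∪ T) : ℝ) = 2 * #S := by
    rw [card_union_of_disjoint hdisjT, hTS]; push_cast; ring
  have hexpanding := hexp (S ∪ T) (by rw [hcardST]; linarith)
  have hsmall := card_nbhd_union_lt G hΔ (card_pos.mp (hTS ▸ hS.card_pos)) hTS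
    fun v hv => (mem_filter.mp (hTT₀ hv)).2
  rw [hcardST] at hexpanding
  linarith

/-- Under the expansion hypothesis `|N(S)| ≥ (1−β)Δ|S|` for all sets of
size at most `α·|V|` (with `α ≤ 1/2`, `0 ≤ β < 1/2`), for disjoint `S, S'` with
`|S| ≤ α|V|/2` and `|S'| ≥ |S|`, at most `|S|` vertices `v ∈ S'` satisfy
`|N(v) ∩ N(S)| > 2βΔ`. -/
theorem stmt3 {V : Type*} [Fintype V] [DecidableEq V] (G : SimpleGraph V)
    [DecidableRel G.Adj] (Δ : ℕ) (hΔ : ∀ v, G.degree v ≤ Δ)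
    (α β : ℝ) (hα : α ≤ 1 / 2) (hβ0 : 0 ≤ β) (hβ : β < 1 / 2)
    (hexp : ∀ S : Finset V, (S.card : ℝ) ≤ α * Fintype.card V →
      (1 - β) * Δ * S.card ≤ ((nbhd G S).card : ℝ))
    (S S' : Finset V) (hdisj : Disjoint S S')
    (hScard : (S.card : ℝ) ≤ α * Fintype.card V / 2)
    (hS'card : S.card ≤ S'.card) :
    ((S'.filter fun v =>
        2 * β * Δ < ((G.neighborFinset v ∩ nbhd G S).card : ℝ)).card : ℝ) ≤ S.card :=
  stmt3_general G Δ hΔ α β hβ0 hexp S S' hdisj hScard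
end

section
/- Let G = (V,E) be a graph on n vertices with maximum degree Δ ≥ 1, and let ENV : V × {1,2} → {0,1} be an environment. Define a pair (v,2) to be violating if either ENV(v,2)=0 and some neighbor u of v has ENV(u,1)=1, or ENV(v,2)=1 and all neighbors u of v have ENV(u,1)=0. Let viol(ENV) be the number of violating pairs and dist(ENV, 1-BP) the minimum, over all environments ENV' with no violating pairs, of (1/(2n))·|{(v,t) : ENV(v,t) ≠ ENV'(v,t)}|. Then viol(ENV)/(2Δn) ≤ dist(ENV, 1-BP) ≤ viol(ENV)/(2n). -/
open Finset

variable {V : Type*} [Fintype V] [DecidableEq V]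

/-- Hamming distance between two environments on two time steps
(time step 1 is index `0`, time step 2 is index `1`). -/
def ham2 (ENV ENV' : V → Fin 2 → Bool) : ℕ :=
  ((Finset.univ : Finset (V × Fin 2)).filter fun p => ENV p.1 p.2 ≠ ENV' p.1 p.2).card

/-- Number of violating pairs `(v,2)` of an environment for the 1-BP rule. -/
def viol2 (G : SimpleGraph V) [DecidableRel G.Adj] (ENV : V → Fin 2 → Bool) : ℕ :=
  (Finset.univ.filter fun v =>
    (ENV v 1 = false ∧ ∃ u ∈ G.neighborFinset v, ENV u 0 = true) ∨
    (ENV v 1 = true ∧ ∀ u ∈ G.neighborFinset v, ENV u 0 = false)).card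

/-- An environment on two steps follows the 1-BP rule (has no violating pairs). -/
def follows2 (G : SimpleGraph V) [DecidableRel G.Adj] (ENV : V → Fin 2 → Bool) : Prop :=
  ∀ v, ENV v 1 = true ↔ ∃ u ∈ G.neighborFinset v, ENV u 0 = true

/-!
A violating vertex `v` of `ENV` is one whose colour at step 2 differs from the 1-BP update of
step 1. Recolouring exactly these vertices at step 2 gives a 1-BP environment at Hamming distance
`viol`, the upper bound. Conversely, if `ENV'` follows 1-BP, then each violating `v` either
disagrees with `ENV'` at `(v, 2)` or has a neighbour `u` on which `ENV` and `ENV'` disagree at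
step 1; a disagreement `(u, 1)` accounts for at most `Δ` violating vertices, whence
`viol ≤ Δ · ham`, the lower bound.
-/

namespace OneBP

omit [DecidableEq V]

variable (G : SimpleGraph V) [DecidableRel G.Adj]

def step (x : V → Bool) (v : V) : Bool :=
  decide (∃ u ∈ G.neighborFinset v, x u = true)

def repair (ENV : V → Fin 2 → Bool) (v : V) : Fin 2 → Bool :=
  ![ENV v 0, step G (ENV · 0) v]

def violators (ENV : V → Fin 2 → Bool) : Finset V :=
  {v | ENV v 1 ≠ step G (ENV · 0) v}

def disagreements (ENV ENV' : V → Fin 2 → Bool) (t : Fin 2) : Finset V :=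
  {v | ENV v t ≠ ENV' v t}

variable {G}

theorem exists_ne_of_step_ne {x y : V → Bool} {v : V} (h : step G x v ≠ step G y v) :
    ∃ u ∈ G.neighborFinset v, x u ≠ y u := by
  by_contra! hxy
  exact h (decide_eq_decide.2 (exists_congr fun u => and_congr_right fun hu => by rw [hxy u hu]))

theorem follows2_iff {ENV : V → Fin 2 → Bool} :
    follows2 G ENV ↔ ∀ v, ENV v 1 = step G (ENV · 0) v := by
  refine forall_congr' fun v => ?_
  rw [step, Bool.eq_iff_iff (b := decide _), decide_eq_true_iff]

theorem follows2_repair (ENV : V → Fin 2 → Bool) : follows2 G (repair G ENV) :=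
  follows2_iff.2 fun _ => rfl

theorem ham2_eq_card_add_card (ENV ENV' : V → Fin 2 → Bool) :
    ham2 ENV ENV' = #(disagreements ENV ENV' 0) + #(disagreements ENV ENV' 1) := by
  simp only [ham2, disagreements, card_filter, Fintype.sum_prod_type]
  rw [sum_comm, Fin.sum_univ_two]

variable [DecidableEq V]

theorem viol2_eq_card_violators (ENV : V → Fin 2 → Bool) :
    viol2 G ENV = #(violators G ENV) := by
  unfold viol2 violators step
  congr 1
  ext v
  simp only [mem_filter, mem_univ, true_and]
  cases ENV v 1 <;> simp

theorem ham2_repair (ENV : V → Fin 2 → Bool) : ham2 ENV (repair G ENV) = viol2 G ENV := by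
  simp [ham2_eq_card_add_card, viol2_eq_card_violators, disagreements, violators, repair]

theorem violators_subset {ENV ENV' : V → Fin 2 → Bool} (h' : follows2 G ENV') :
    violators G ENV ⊆
      disagreements ENV ENV' 1 ∪ (disagreements ENV ENV' 0).biUnion (G.neighborFinset ·) := by
  intro v hv
  simp only [violators, disagreements, mem_union, mem_biUnion, mem_filter, mem_univ, true_and,
    SimpleGraph.mem_neighborFinset] at hv ⊢
  by_cases h1 : ENV v 1 = ENV' v 1
  · rw [h1, follows2_iff.1 h' v] at hv
    obtain ⟨u, hu, hne⟩ := exists_ne_of_step_ne hv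
    exact .inr ⟨u, hne.symm, G.adj_symm ((G.mem_neighborFinset _ _).1 hu)⟩
  · exact .inl h1

theorem viol2_le_mul_ham2 {Δ : ℕ} (hΔ1 : 1 ≤ Δ) (hΔ : ∀ v, G.degree v ≤ Δ)
    {ENV ENV' : V → Fin 2 → Bool} (h' : follows2 G ENV') :
    viol2 G ENV ≤ Δ * ham2 ENV ENV' := by
  rw [viol2_eq_card_violators, ham2_eq_card_add_card]
  have hnbhd := card_biUnion_le_card_mul (disagreements ENV ENV' 0) (G.neighborFinset ·) Δ
    fun u _ => (G.card_neighborFinset_eq_degree u).trans_le (hΔ u)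
  calc _ ≤ _ := card_le_card (violators_subset h')
    _ ≤ _ := card_union_le _ _
    _ ≤ Δ * (#(disagreements ENV ENV' 0) + #(disagreements ENV ENV' 1)) := by nlinarith

end OneBP

open OneBP in
theorem stmt4_general (G : SimpleGraph V) [DecidableRel G.Adj] (n Δ : ℕ)
    (hΔ1 : 1 ≤ Δ) (hΔ : ∀ v, G.degree v ≤ Δ)
    (ENV : V → Fin 2 → Bool) :
    (∀ ENV' : V → Fin 2 → Bool, follows2 G ENV' →
      (viol2 G ENV : ℝ) / (2 * Δ * n) ≤ (ham2 ENV ENV' : ℝ) / (2 * n)) ∧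
    (∃ ENV' : V → Fin 2 → Bool, follows2 G ENV' ∧
      (ham2 ENV ENV' : ℝ) / (2 * n) ≤ (viol2 G ENV : ℝ) / (2 * n)) := by
  refine ⟨fun ENV' h' => ?_, ⟨repair G ENV, follows2_repair ENV, by rw [ham2_repair]⟩⟩
  have hΔpos : (0 : ℝ) < Δ := by exact_mod_cast hΔ1
  have hviol : (viol2 G ENV : ℝ) ≤ ham2 ENV ENV' * Δ := by
    exact_mod_cast (viol2_le_mul_ham2 hΔ1 hΔ h').trans_eq (mul_comm _ _)
  calc (viol2 G ENV : ℝ) / (2 * Δ * n) = (viol2 G ENV / Δ) / (2 * n) := by ring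
    _ ≤ (ham2 ENV ENV' : ℝ) / (2 * n) := by gcongr; rwa [div_le_iff₀ hΔpos]

/-- For `T = 2`, `viol(ENV)/(2Δn) ≤ dist(ENV,1-BP) ≤ viol(ENV)/(2n)`,
where `dist(ENV,1-BP)` is the minimum of `ham(ENV,ENV')/(2n)` over environments `ENV'`
with no violating pairs. -/
theorem stmt4 (G : SimpleGraph V) [DecidableRel G.Adj] (n Δ : ℕ)
    (hn : n = Fintype.card V) (hΔ1 : 1 ≤ Δ) (hΔ : ∀ v, G.degree v ≤ Δ)
    (hiso : ∀ v, 0 < G.degree v) (ENV : V → Fin 2 → Bool) :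
    (∀ ENV' : V → Fin 2 → Bool, follows2 G ENV' →
      (viol2 G ENV : ℝ) / (2 * Δ * n) ≤ (ham2 ENV ENV' : ℝ) / (2 * n)) ∧
    (∃ ENV' : V → Fin 2 → Bool, follows2 G ENV' ∧
      (ham2 ENV ENV' : ℝ) / (2 * n) ≤ (viol2 G ENV : ℝ) / (2 * n)) :=
  stmt4_general G n Δ hΔ1 hΔ ENV
end

section
/- Let G = (V,E) be a graph on n vertices with maximum degree 2 ≤ Δ, let T ≥ 2, and let ENV : V × [T] → {0,1}. A pair (v,t) with 2 ≤ t ≤ T is violating if either ENV(v,t)=0 and some neighbor u of v has ENV(u,t−1)=1, or ENV(v,t)=1 and all neighbors u of v have ENV(u,t−1)=0. Let viol(ENV) be the number of violating pairs and dist(ENV, 1-BP) the minimum normalized Hamming distance (1/(nT))·#{(v,t) : ENV(v,t) ≠ ENV'(v,t)} over environments ENV' with no violating pairs. Then viol(ENV)/((Δ+1)·n·T) ≤ dist(ENV, 1-BP) ≤ ((Δ^{T−1} − 1)/((Δ−1)·n·T))·viol(ENV). -/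
/-! Compare `ENV` with an environment `ENV'` that follows 1-BP. If no neighbour of `v` disagrees
between the two at time `t - 1`, the rule prescribes the same value at `(v, t)` for both, so
`(v, t)` is violating in `ENV` exactly when `ENV` and `ENV'` disagree at `(v, t)`. Hence every
violation at time `t` that is not a disagreement, and every disagreement that is not a
violation, lies among the at most `Δ` neighbours of a disagreement at time `t - 1`. Summing over
`t` gives `viol ≤ (Δ + 1) · ham` for every such `ENV'`. Conversely, let `ENV'` be the 1-BP run
started from the configuration of `ENV` at time 1. With `D_t` disagreements and `B_t` violations
at time `t`, `D_1 = 0` and `D_t ≤ B_t + Δ · D_{t-1}`, which unrolls to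
`ham ≤ (1 + Δ + ⋯ + Δ^{T-2}) · viol`. -/

open Finset

variable {V : Type*} [Fintype V] [DecidableEq V]

/-- Hamming distance between two environments over time steps `1,…,T`. -/
def hamT (T : ℕ) (ENV ENV' : V → ℕ → Bool) : ℕ :=
  (((Finset.univ : Finset V) ×ˢ Finset.Icc 1 T).filter
    fun p => ENV p.1 p.2 ≠ ENV' p.1 p.2).card

/-- Number of violating pairs `(v,t)`, `2 ≤ t ≤ T`, of an environment for 1-BP. -/
def violT (G : SimpleGraph V) [DecidableRel G.Adj] (T : ℕ) (ENV : V → ℕ → Bool) : ℕ :=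
  (((Finset.univ : Finset V) ×ˢ Finset.Icc 2 T).filter fun p =>
    (ENV p.1 p.2 = false ∧ ∃ u ∈ G.neighborFinset p.1, ENV u (p.2 - 1) = true) ∨
    (ENV p.1 p.2 = true ∧ ∀ u ∈ G.neighborFinset p.1, ENV u (p.2 - 1) = false)).card

/-- An environment over `T` steps follows the 1-BP rule (no violating pairs). -/
def followsT (G : SimpleGraph V) [DecidableRel G.Adj] (T : ℕ) (ENV : V → ℕ → Bool) : Prop :=
  ∀ v, ∀ t, 2 ≤ t → t ≤ T →
    (ENV v t = true ↔ ∃ u ∈ G.neighborFinset v, ENV u (t - 1) = true)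

section Recurrence

theorem sum_Icc_two_succ_pred (d : ℕ → ℕ) (T : ℕ) :
    ∑ t ∈ Icc 2 (T + 1), d (t - 1) = ∑ t ∈ Icc 1 T, d t := by
  rw [← map_add_right_Icc 1 T 1, sum_map]
  simp

theorem sum_Icc_two_pred_le (d : ℕ → ℕ) (T : ℕ) :
    ∑ t ∈ Icc 2 T, d (t - 1) ≤ ∑ t ∈ Icc 1 T, d t := by
  cases T with
  | zero => simp
  | succ T =>
    rw [sum_Icc_two_succ_pred]
    exact sum_le_sum_of_subset (Icc_subset_Icc_right T.le_succ)

theorem sum_Icc_le_geom_sum_mul {d b : ℕ → ℕ} {Δ : ℕ} (h₁ : d 1 = 0)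
    (hstep : ∀ t, 2 ≤ t → d t ≤ b t + Δ * d (t - 1)) (T : ℕ) :
    ∑ t ∈ Icc 1 T, d t ≤ (∑ k ∈ range (T - 1), Δ ^ k) * ∑ t ∈ Icc 2 T, b t := by
  induction T with
  | zero => simp
  | succ T ih =>
    rcases T.eq_zero_or_pos with rfl | hT
    · simp [h₁]
    have hrec : ∑ t ∈ Icc 1 (T + 1), d t
        ≤ ∑ t ∈ Icc 2 (T + 1), b t + Δ * ∑ t ∈ Icc 1 T, d t := by
      rw [Icc_eq_cons_Ioc (by omega), sum_cons, h₁, zero_add, ← Icc_add_one_left_eq_Ioc,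
        ← sum_Icc_two_succ_pred, mul_sum, ← sum_add_distrib]
      exact sum_le_sum fun t ht => hstep t (mem_Icc.1 ht).1
    have hgeom :
        ∑ k ∈ range (T + 1 - 1), Δ ^ k = 1 + Δ * ∑ k ∈ range (T - 1), Δ ^ k := by
      obtain ⟨m, rfl⟩ : ∃ m, T = m + 1 := ⟨T - 1, by omega⟩
      simp only [Nat.add_sub_cancel, sum_range_succ', pow_succ', ← mul_sum, pow_zero]
      ring
    have hmono : ∑ t ∈ Icc 2 T, b t ≤ ∑ t ∈ Icc 2 (T + 1), b t :=
      sum_le_sum_of_subset (Icc_subset_Icc_right T.le_succ)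
    calc ∑ t ∈ Icc 1 (T + 1), d t
        ≤ ∑ t ∈ Icc 2 (T + 1), b t
            + Δ * ((∑ k ∈ range (T - 1), Δ ^ k) * ∑ t ∈ Icc 2 T, b t) :=
          hrec.trans (by gcongr)
      _ ≤ ∑ t ∈ Icc 2 (T + 1), b t
            + Δ * ((∑ k ∈ range (T - 1), Δ ^ k) * ∑ t ∈ Icc 2 (T + 1), b t) := by gcongr
      _ = (∑ k ∈ range (T + 1 - 1), Δ ^ k) * ∑ t ∈ Icc 2 (T + 1), b t := by
          rw [hgeom]; ring

end Recurrence

section Counting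

variable {V : Type*} [Fintype V] (G : SimpleGraph V) [DecidableRel G.Adj]

theorem card_le_card_add_mul_card [DecidableEq V] {Δ : ℕ} (hΔ : ∀ v, G.degree v ≤ Δ)
    {A B C : Finset V} (h : ∀ v ∈ A, v ∉ B → ∃ u ∈ C, G.Adj v u) :
    #A ≤ #B + Δ * #C := by
  have hsub : A ⊆ B ∪ C.biUnion fun u => G.neighborFinset u := by
    intro v hv
    by_cases hvB : v ∈ B
    · exact mem_union_left _ hvB
    · obtain ⟨u, hu, hadj⟩ := h v hv hvB
      exact mem_union_right _ (mem_biUnion.2 ⟨u, hu, (G.mem_neighborFinset u v).2 hadj.symm⟩)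
  calc #A ≤ #(B ∪ C.biUnion fun u => G.neighborFinset u) := card_le_card hsub
    _ ≤ #B + #(C.biUnion fun u => G.neighborFinset u) := card_union_le _ _
    _ ≤ #B + Δ * #C := by
      rw [mul_comm]
      gcongr
      exact card_biUnion_le_card_mul _ _ _ fun u _ =>
        (G.card_neighborFinset_eq_degree u).trans_le (hΔ u)

def bpRule (ENV : V → ℕ → Bool) (v : V) (t : ℕ) : Bool :=
  decide (∃ u ∈ G.neighborFinset v, ENV u (t - 1) = true)

def disagreement (ENV ENV' : V → ℕ → Bool) (t : ℕ) : Finset V :=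
  univ.filter fun v => ENV v t ≠ ENV' v t

def violators (ENV : V → ℕ → Bool) (t : ℕ) : Finset V :=
  univ.filter fun v => ENV v t ≠ bpRule G ENV v t

theorem followsT_iff {T : ℕ} {ENV : V → ℕ → Bool} :
    followsT G T ENV ↔ ∀ v t, 2 ≤ t → t ≤ T → ENV v t = bpRule G ENV v t := by
  simp only [followsT, bpRule, Bool.eq_iff_iff (b := decide _), decide_eq_true_iff]

theorem violT_eq_sum [DecidableEq V] (T : ℕ) (ENV : V → ℕ → Bool) :
    violT G T ENV = ∑ t ∈ Icc 2 T, #(violators G ENV t) := by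
  rw [violT, card_filter, sum_product, sum_comm]
  refine sum_congr rfl fun t _ => ?_
  rw [violators, card_filter]
  refine sum_congr rfl fun v _ => ?_
  cases ENV v t <;> simp [bpRule]

theorem hamT_eq_sum (T : ℕ) (ENV ENV' : V → ℕ → Bool) :
    hamT T ENV ENV' = ∑ t ∈ Icc 1 T, #(disagreement ENV ENV' t) := by
  rw [hamT, card_filter, sum_product, sum_comm]
  exact sum_congr rfl fun t _ => (card_filter _ _).symm

theorem mem_violators_iff_mem_disagreement {ENV ENV' : V → ℕ → Bool} {v : V} {t : ℕ}
    (hfollow : ENV' v t = bpRule G ENV' v t)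
    (hagree : ∀ u, G.Adj v u → u ∉ disagreement ENV ENV' (t - 1)) :
    v ∈ violators G ENV t ↔ v ∈ disagreement ENV ENV' t := by
  have hrule : bpRule G ENV v t = bpRule G ENV' v t := by
    simp only [disagreement, mem_filter, mem_univ, true_and, not_not] at hagree
    simp only [bpRule, SimpleGraph.mem_neighborFinset]
    exact decide_eq_decide.2 ⟨fun ⟨u, hu, h⟩ => ⟨u, hu, hagree u hu ▸ h⟩,
      fun ⟨u, hu, h⟩ => ⟨u, hu, (hagree u hu).symm ▸ h⟩⟩
  simp only [violators, disagreement, mem_filter, mem_univ, true_and, hrule, ← hfollow]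

variable [DecidableEq V] {Δ : ℕ} {ENV ENV' : V → ℕ → Bool} {t : ℕ}

theorem card_violators_le (hΔ : ∀ v, G.degree v ≤ Δ)
    (hfollow : ∀ v, ENV' v t = bpRule G ENV' v t) :
    #(violators G ENV t)
      ≤ #(disagreement ENV ENV' t) + Δ * #(disagreement ENV ENV' (t - 1)) := by
  refine card_le_card_add_mul_card G hΔ fun v hv hvD => ?_
  by_contra! hagree
  exact hvD ((mem_violators_iff_mem_disagreement G (hfollow v)
    fun u hu hmem => hagree u hmem hu).1 hv)

theorem card_disagreement_le (hΔ : ∀ v, G.degree v ≤ Δ)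
    (hfollow : ∀ v, ENV' v t = bpRule G ENV' v t) :
    #(disagreement ENV ENV' t)
      ≤ #(violators G ENV t) + Δ * #(disagreement ENV ENV' (t - 1)) := by
  refine card_le_card_add_mul_card G hΔ fun v hv hvB => ?_
  by_contra! hagree
  exact hvB ((mem_violators_iff_mem_disagreement G (hfollow v)
    fun u hu hmem => hagree u hmem hu).2 hv)

end Counting

section BPRun

variable {V : Type*} [Fintype V] (G : SimpleGraph V) [DecidableRel G.Adj]

-- `bpRunFrom G x k` is the configuration at time `k + 1` of the 1-BP run with configuration `x`
-- at time 1.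
def bpRunFrom (x : V → Bool) : ℕ → V → Bool
  | 0 => x
  | k + 1 => fun v => decide (∃ u ∈ G.neighborFinset v, bpRunFrom x k u = true)

def bpRun (ENV : V → ℕ → Bool) : V → ℕ → Bool :=
  fun v t => bpRunFrom G (fun v => ENV v 1) (t - 1) v

theorem bpRun_eq_bpRule (ENV : V → ℕ → Bool) (v : V) {t : ℕ} (ht : 2 ≤ t) :
    bpRun G ENV v t = bpRule G (bpRun G ENV) v t := by
  obtain ⟨k, rfl⟩ : ∃ k, t = k + 2 := ⟨t - 2, by omega⟩
  rfl

theorem followsT_bpRun (T : ℕ) (ENV : V → ℕ → Bool) : followsT G T (bpRun G ENV) :=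
  (followsT_iff G).2 fun v _ ht _ => bpRun_eq_bpRule G ENV v ht

theorem disagreement_bpRun_one (ENV : V → ℕ → Bool) :
    disagreement ENV (bpRun G ENV) 1 = ∅ := by
  simp [disagreement, bpRun, bpRunFrom]

end BPRun

section Bounds

variable {V : Type*} [Fintype V] [DecidableEq V] (G : SimpleGraph V) [DecidableRel G.Adj]
  {Δ : ℕ} (T : ℕ)

theorem violT_le_mul_hamT (hΔ : ∀ v, G.degree v ≤ Δ) {ENV ENV' : V → ℕ → Bool}
    (hf : followsT G T ENV') : violT G T ENV ≤ (Δ + 1) * hamT T ENV ENV' := by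
  have hstep : ∀ t ∈ Icc 2 T, #(violators G ENV t)
      ≤ #(disagreement ENV ENV' t) + Δ * #(disagreement ENV ENV' (t - 1)) := fun t ht =>
    card_violators_le G hΔ fun v => (followsT_iff G).1 hf v t (mem_Icc.1 ht).1 (mem_Icc.1 ht).2
  calc violT G T ENV
      ≤ ∑ t ∈ Icc 2 T, #(disagreement ENV ENV' t)
          + Δ * ∑ t ∈ Icc 2 T, #(disagreement ENV ENV' (t - 1)) := by
        rw [violT_eq_sum, mul_sum, ← sum_add_distrib]
        exact sum_le_sum hstep
    _ ≤ hamT T ENV ENV' + Δ * hamT T ENV ENV' := by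
        rw [hamT_eq_sum]
        exact add_le_add (sum_le_sum_of_subset (Icc_subset_Icc_left (by norm_num)))
          (Nat.mul_le_mul_left _ (sum_Icc_two_pred_le (fun t => #(disagreement ENV ENV' t)) T))
    _ = (Δ + 1) * hamT T ENV ENV' := by ring

theorem hamT_bpRun_le (hΔ : ∀ v, G.degree v ≤ Δ) (ENV : V → ℕ → Bool) :
    hamT T ENV (bpRun G ENV) ≤ (∑ k ∈ range (T - 1), Δ ^ k) * violT G T ENV := by
  rw [hamT_eq_sum, violT_eq_sum]
  refine sum_Icc_le_geom_sum_mul (by simp [disagreement_bpRun_one]) (fun t ht => ?_) T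
  exact card_disagreement_le G hΔ fun v => bpRun_eq_bpRule G ENV v ht

end Bounds

theorem stmt5_general (G : SimpleGraph V) [DecidableRel G.Adj] (n Δ T : ℕ)
    (hΔ2 : 2 ≤ Δ) (hΔ : ∀ v, G.degree v ≤ Δ) (ENV : V → ℕ → Bool) :
    (∀ ENV' : V → ℕ → Bool, followsT G T ENV' →
      (violT G T ENV : ℝ) / ((Δ + 1) * n * T) ≤ (hamT T ENV ENV' : ℝ) / (n * T)) ∧
    (∃ ENV' : V → ℕ → Bool, followsT G T ENV' ∧
      (hamT T ENV ENV' : ℝ) / (n * T) ≤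
        ((Δ : ℝ) ^ (T - 1) - 1) / ((Δ - 1) * n * T) * violT G T ENV) := by
  refine ⟨fun ENV' hf => ?_, bpRun G ENV, followsT_bpRun G T ENV, ?_⟩
  · have hle : (violT G T ENV : ℝ) ≤ (Δ + 1) * hamT T ENV ENV' := by
      exact_mod_cast violT_le_mul_hamT G T hΔ hf
    calc (violT G T ENV : ℝ) / ((Δ + 1) * n * T)
        ≤ (Δ + 1) * hamT T ENV ENV' / ((Δ + 1) * (n * T)) := by
          rw [← mul_assoc]; gcongr
      _ = hamT T ENV ENV' / (n * T) := mul_div_mul_left _ _ (by positivity)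
  · have hgeom : ((∑ k ∈ range (T - 1), Δ ^ k : ℕ) : ℝ)
        = ((Δ : ℝ) ^ (T - 1) - 1) / (Δ - 1) := by
      push_cast
      exact geom_sum_eq (by exact_mod_cast (by omega : Δ ≠ 1)) _
    have hle : (hamT T ENV (bpRun G ENV) : ℝ)
        ≤ (∑ k ∈ range (T - 1), Δ ^ k : ℕ) * violT G T ENV := by
      exact_mod_cast hamT_bpRun_le G T hΔ ENV
    calc (hamT T ENV (bpRun G ENV) : ℝ) / (n * T)
        ≤ (∑ k ∈ range (T - 1), Δ ^ k : ℕ) * violT G T ENV / (n * T) := by gcongr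
      _ = ((Δ : ℝ) ^ (T - 1) - 1) / ((Δ - 1) * n * T) * violT G T ENV := by
          rw [hgeom, div_mul_eq_mul_div, div_div]; ring

/-- For general `T ≥ 2` and `Δ ≥ 2`,
`viol(ENV)/((Δ+1)nT) ≤ dist(ENV,1-BP) ≤ ((Δ^{T-1}−1)/((Δ−1)nT))·viol(ENV)`,
where `dist(ENV,1-BP)` is the minimum of `ham(ENV,ENV')/(nT)` over environments
with no violating pairs. -/
theorem stmt5 (G : SimpleGraph V) [DecidableRel G.Adj] (n Δ T : ℕ)
    (hn : n = Fintype.card V) (hΔ2 : 2 ≤ Δ) (hΔ : ∀ v, G.degree v ≤ Δ)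
    (hiso : ∀ v, 0 < G.degree v) (hT : 2 ≤ T) (ENV : V → ℕ → Bool) :
    (∀ ENV' : V → ℕ → Bool, followsT G T ENV' →
      (violT G T ENV : ℝ) / ((Δ + 1) * n * T) ≤ (hamT T ENV ENV' : ℝ) / (n * T)) ∧
    (∃ ENV' : V → ℕ → Bool, followsT G T ENV' ∧
      (hamT T ENV ENV' : ℝ) / (n * T) ≤
        ((Δ : ℝ) ^ (T - 1) - 1) / ((Δ - 1) * n * T) * violT G T ENV) :=
  stmt5_general G n Δ T hΔ2 hΔ ENV
end

section
/- Let G = (V,E) be a graph with maximum degree Δ and suppose every set S of vertices with |S| ≤ K satisfies |N(S)| ≥ (1−β)Δ|S|, where β < 1/2. Let S, S' be disjoint vertex sets with |S| = |S'| ≤ K/2. Then there exists a vertex v ∈ S' such that |N(v) ∩ N(S)| ≤ 2βΔ. -/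
open Finset

namespace nbhd

variable {V : Type*} [Fintype V] [DecidableEq V] (G : SimpleGraph V) [DecidableRel G.Adj]

theorem union (S T : Finset V) : nbhd G (S ∪ T) = nbhd G S ∪ nbhd G T :=
  union_biUnion

theorem sdiff_eq_biUnion (S S' : Finset V) :
    nbhd G S' \ nbhd G S = S'.biUnion fun v => G.neighborFinset v \ nbhd G S := by
  ext x
  simp only [nbhd, mem_sdiff, mem_biUnion]
  tauto

theorem card_le_mul {Δ : ℕ} (hΔ : ∀ v, G.degree v ≤ Δ) (S : Finset V) :
    #(nbhd G S) ≤ #S * Δ :=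
  card_biUnion_le_card_mul _ _ _ fun v _ => (G.card_neighborFinset_eq_degree v).trans_le (hΔ v)

theorem card_union_add_sum_card_inter_le (S S' : Finset V) :
    #(nbhd G (S ∪ S')) + ∑ v ∈ S', #(G.neighborFinset v ∩ nbhd G S) ≤
      #(nbhd G S) + ∑ v ∈ S', G.degree v := by
  have hnew : #(nbhd G (S ∪ S')) ≤ #(nbhd G S) + ∑ v ∈ S', #(G.neighborFinset v \ nbhd G S) :=
    calc #(nbhd G (S ∪ S'))
        = #(nbhd G S ∪ (nbhd G S' \ nbhd G S)) := by rw [union, union_sdiff_self_eq_union]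
      _ ≤ #(nbhd G S) + #(nbhd G S' \ nbhd G S) := card_union_le _ _
      _ ≤ #(nbhd G S) + ∑ v ∈ S', #(G.neighborFinset v \ nbhd G S) := by
        rw [sdiff_eq_biUnion]
        exact Nat.add_le_add_left card_biUnion_le _
  have hsplit : ∀ v, #(G.neighborFinset v \ nbhd G S) + #(G.neighborFinset v ∩ nbhd G S) =
      G.degree v := fun v =>
    (card_sdiff_add_card_inter _ _).trans (G.card_neighborFinset_eq_degree v)
  rw [← sum_congr rfl fun v _ => hsplit v, sum_add_distrib]
  omega

end nbhd

theorem stmt12_general {V : Type*} [Fintype V] [DecidableEq V] (G : SimpleGraph V)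
    [DecidableRel G.Adj] (Δ K : ℕ) (hΔ : ∀ v, G.degree v ≤ Δ)
    (β : ℝ)
    (hexp : ∀ S : Finset V, S.card ≤ K →
      (1 - β) * Δ * S.card ≤ ((nbhd G S).card : ℝ))
    (S S' : Finset V) (hdisj : Disjoint S S') (hne : S'.Nonempty)
    (hcard : S.card = S'.card) (hhalf : (S.card : ℝ) ≤ (K : ℝ) / 2) :
    ∃ v ∈ S', ((G.neighborFinset v ∩ nbhd G S).card : ℝ) ≤ 2 * β * Δ := by
  have hT : #(S ∪ S') = 2 * #S := by rw [card_union_of_disjoint hdisj, hcard]; ring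
  have hTK : #(S ∪ S') ≤ K := by
    exact_mod_cast (show (#(S ∪ S') : ℝ) ≤ K by push_cast [hT]; linarith)
  have hexpT := hexp _ hTK
  have hcount : (#(nbhd G (S ∪ S')) : ℝ) + ∑ v ∈ S', (#(G.neighborFinset v ∩ nbhd G S) : ℝ) ≤
      #(nbhd G S) + ∑ v ∈ S', (G.degree v : ℝ) := by
    exact_mod_cast nbhd.card_union_add_sum_card_inter_le G S S'
  have hNS : (#(nbhd G S) : ℝ) ≤ #S * Δ := by exact_mod_cast nbhd.card_le_mul G hΔ S
  have hdeg : ∑ v ∈ S', (G.degree v : ℝ) ≤ ∑ _v ∈ S', (Δ : ℝ) :=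
    sum_le_sum fun v _ => by exact_mod_cast hΔ v
  refine exists_le_of_sum_le hne ?_
  simp only [sum_const, nsmul_eq_mul, ← hcard] at hdeg ⊢
  push_cast [hT] at hexpT
  linarith

/-- Under the expansion hypothesis `|N(S)| ≥ (1−β)Δ|S|` for sets of size
at most `K` (with `0 ≤ β < 1/2`), for disjoint nonempty `S, S'` with `|S| = |S'| ≤ K/2`
there is a vertex `v ∈ S'` with `|N(v) ∩ N(S)| ≤ 2βΔ`. -/
theorem stmt12 {V : Type*} [Fintype V] [DecidableEq V] (G : SimpleGraph V)
    [DecidableRel G.Adj] (Δ K : ℕ) (hK : 0 < K) (hΔ : ∀ v, G.degree v ≤ Δ)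
    (β : ℝ) (hβ0 : 0 ≤ β) (hβ : β < 1 / 2)
    (hexp : ∀ S : Finset V, S.card ≤ K →
      (1 - β) * Δ * S.card ≤ ((nbhd G S).card : ℝ))
    (S S' : Finset V) (hdisj : Disjoint S S') (hne : S'.Nonempty)
    (hcard : S.card = S'.card) (hhalf : (S.card : ℝ) ≤ (K : ℝ) / 2) :
    ∃ v ∈ S', ((G.neighborFinset v ∩ nbhd G S).card : ℝ) ≤ 2 * β * Δ :=
  stmt12_general G Δ K hΔ β hexp S S' hdisj hne hcard hhalf
end

section
/- Let G = (V,E) be a graph and Q ⊆ V a set of 'queried' vertices at time 2 with observed values ENV(Q,1) all equal to 0 and a subset Q₁ ⊆ Q of vertices with ENV(v,2) = 1 for v ∈ Q₁ and ENV(v,2) = 0 for v ∈ Q∖Q₁ =: Q₀. Suppose for every v ∈ Q₁ there exists a vertex p_v ∈ N(v) with p_v ∉ Q and p_v ∉ N(Q₀). Then there exists an environment ENV' following the 1-BP rule (no violating pairs) that agrees with the observed values: ENV'(u,1) = 0 for u ∈ Q, ENV'(v,2) = 1 for v ∈ Q₁, and ENV'(v,2) = 0 for v ∈ Q₀. Specifically,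 setting ENV'(u,1) = 1 iff u = p_v for some v ∈ Q₁, and ENV'(u,2) = 1 iff u ∈ N(p_v) for some v ∈ Q₁, works. -/
/-! Seed time 1 with every vertex that is neither queried nor adjacent to `Q₀`, and let time 2
be its neighbourhood. The seeds avoid `Q`, every vertex of `Q₀` misses them by construction,
and the hypothesis provides each vertex of `Q₁` with a seed among its neighbours. -/

namespace SimpleGraph

variable {V : Type*} (G : SimpleGraph V) [∀ v, Fintype (G.neighborSet v)]

def FollowsOneBP (ENV : V → Fin 2 → Bool) : Prop :=
  ∀ v, ENV v 1 = true ↔ ∃ u ∈ G.neighborFinset v, ENV u 0 = true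

open Classical in
theorem exists_followsOneBP_seed (S : Set V) :
    ∃ ENV : V → Fin 2 → Bool, G.FollowsOneBP ENV ∧ ∀ u, ENV u 0 = true ↔ u ∈ S :=
  ⟨fun u => ![decide (u ∈ S), decide (∃ w ∈ G.neighborFinset u, w ∈ S)],
    fun v => by simp, fun u => by simp⟩

end SimpleGraph

theorem stmt19_general {V : Type*} [Fintype V] [DecidableEq V] (G : SimpleGraph V)
    [DecidableRel G.Adj] (Q Q₁ : Finset V)
    (hp : ∀ v ∈ Q₁, ∃ p, G.Adj v p ∧ p ∉ Q ∧ ∀ w ∈ Q \ Q₁, ¬ G.Adj w p) :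
    ∃ ENV' : V → Fin 2 → Bool,
      (∀ v, ENV' v 1 = true ↔ ∃ u ∈ G.neighborFinset v, ENV' u 0 = true) ∧
      (∀ v ∈ Q, ENV' v 0 = false) ∧
      (∀ v ∈ Q₁, ENV' v 1 = true) ∧
      (∀ v ∈ Q \ Q₁, ENV' v 1 = false) := by
  obtain ⟨ENV', hBP, hseed⟩ :=
    G.exists_followsOneBP_seed {u | u ∉ Q ∧ ∀ w ∈ Q \ Q₁, ¬ G.Adj w u}
  refine ⟨ENV', hBP, fun v hv => ?_, fun v hv => ?_, fun v hv => ?_⟩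
  · rw [Bool.eq_false_iff, ne_eq, hseed]
    exact fun hS => hS.1 hv
  · obtain ⟨p, hvp, hpQ, hpQ₀⟩ := hp v hv
    exact (hBP v).2 ⟨p, (G.mem_neighborFinset v p).2 hvp, (hseed p).2 ⟨hpQ, hpQ₀⟩⟩
  · rw [Bool.eq_false_iff, ne_eq, hBP]
    rintro ⟨u, hu, hu0⟩
    exact ((hseed u).1 hu0).2 v hv ((G.mem_neighborFinset v u).1 hu)

/-- If `Q` is queried (all white at step 1), `Q₁ ⊆ Q` is black at step 2,
`Q₀ = Q∖Q₁` is white at step 2, and every `v ∈ Q₁` has a neighbor `p_v ∉ Q ∪ N(Q₀)`,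
then some environment following 1-BP agrees with all observed values. -/
theorem stmt19 {V : Type*} [Fintype V] [DecidableEq V] (G : SimpleGraph V)
    [DecidableRel G.Adj] (Q Q₁ : Finset V) (hQ₁ : Q₁ ⊆ Q)
    (ENV : V → Fin 2 → Bool)
    (hobs1 : ∀ v ∈ Q, ENV v 0 = false)
    (hobs2 : ∀ v ∈ Q₁, ENV v 1 = true)
    (hobs3 : ∀ v ∈ Q \ Q₁, ENV v 1 = false)
    (hp : ∀ v ∈ Q₁, ∃ p, G.Adj v p ∧ p ∉ Q ∧ ∀ w ∈ Q \ Q₁, ¬ G.Adj w p) :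
    ∃ ENV' : V → Fin 2 → Bool,
      (∀ v, ENV' v 1 = true ↔ ∃ u ∈ G.neighborFinset v, ENV' u 0 = true) ∧
      (∀ v ∈ Q, ENV' v 0 = false) ∧
      (∀ v ∈ Q₁, ENV' v 1 = true) ∧
      (∀ v ∈ Q \ Q₁, ENV' v 1 = false) :=
  stmt19_general G Q Q₁ hp
end
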